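/- In the degenerate even-period case, the sign in the identity ∏_{i=0}^{n-1}(x_i - λ_i) = ± ∏_{i=0}^{n-1} λ_i is determined by the parity of n/2: the sign is + if n ≡ 0 (mod 4) and − if n ≡ 2 (mod 4). -/

import Mathlib

/-!
Grouping the factors in consecutive pairs, the recurrence gives
`(x_{2k} - λ_{2k}) (x_{2k+1} - λ_{2k+1}) = -λ_{2k+1}²`, so
`∏ (xᵢ - λᵢ) = (-1)^m ∏_k λ_{2k+1}²`, and the balance condition
`∏_k λ_{2k} = ∏_k λ_{2k+1}` turns `∏_k λ_{2k+1}²` into `∏ λᵢ`.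
-/

open Finset

theorem Finset.prod_range_two_mul {M : Type*} [CommMonoid M] (f : ℕ → M) (m : ℕ) :
    ∏ i ∈ range (2 * m), f i = ∏ k ∈ range m, (f (2 * k) * f (2 * k + 1)) := by
  induction m with
  | zero => simp
  | succ m ih =>
    rw [Nat.mul_succ, prod_range_succ, prod_range_succ, prod_range_succ, ih, mul_assoc]

theorem prod_range_two_mul_eq_neg_one_pow_mul {R : Type*} [CommRing R] (m : ℕ) (a lam : ℕ → R)
    (hpair : ∀ k < m, a (2 * k) * a (2 * k + 1) = -lam (2 * k + 1) ^ 2)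
    (hbal : ∏ k ∈ range m, lam (2 * k) = ∏ k ∈ range m, lam (2 * k + 1)) :
    ∏ i ∈ range (2 * m), a i = (-1) ^ m * ∏ i ∈ range (2 * m), lam i := by
  calc ∏ i ∈ range (2 * m), a i
      = ∏ k ∈ range m, (-1 * (lam (2 * k + 1) * lam (2 * k + 1))) := by
        rw [prod_range_two_mul]
        refine prod_congr rfl fun k hk => ?_
        rw [hpair k (mem_range.mp hk)]
        ring
    _ = (-1) ^ m * ((∏ k ∈ range m, lam (2 * k)) * ∏ k ∈ range m, lam (2 * k + 1)) := by
        rw [prod_mul_distrib, prod_mul_distrib, prod_const, card_range, hbal]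
    _ = (-1) ^ m * ∏ i ∈ range (2 * m), lam i := by
        rw [← prod_mul_distrib, ← prod_range_two_mul]

theorem sub_mul_sub_eq_neg_sq_of_eq_neg_sq_div {K : Type*} [Field K] {x₀ x₁ l₀ l₁ : K}
    (hne : x₀ ≠ l₀) (hrec : x₁ - l₁ = -l₁ ^ 2 / (x₀ - l₀)) :
    (x₀ - l₀) * (x₁ - l₁) = -l₁ ^ 2 := by
  rw [hrec, mul_div_cancel₀ _ (sub_ne_zero.mpr hne)]

theorem degenerate_sign_parity_general (m : ℕ)
    (lam : ℕ → ℝ)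
    (hbal : ∏ k ∈ Finset.range m, lam (2 * k) =
      ∏ k ∈ Finset.range m, lam (2 * k + 1))
    (x : ℕ → ℝ) (hne : ∀ i < 2 * m, x i ≠ lam i)
    (hrec : ∀ i, i + 1 < 2 * m →
      x (i + 1) - lam (i + 1) = -(lam (i + 1)) ^ 2 / (x i - lam i)) :
    ((2 * m) % 4 = 0 →
      ∏ i ∈ Finset.range (2 * m), (x i - lam i) =
        ∏ i ∈ Finset.range (2 * m), lam i) ∧
    ((2 * m) % 4 = 2 →
      ∏ i ∈ Finset.range (2 * m), (x i - lam i) =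
        -∏ i ∈ Finset.range (2 * m), lam i) := by
  have key : ∏ i ∈ range (2 * m), (x i - lam i) = (-1) ^ m * ∏ i ∈ range (2 * m), lam i :=
    prod_range_two_mul_eq_neg_one_pow_mul m (fun i => x i - lam i) lam
      (fun k hk => sub_mul_sub_eq_neg_sq_of_eq_neg_sq_div (hne _ (by omega)) (hrec _ (by omega))) hbal
  refine ⟨fun h4 => ?_, fun h4 => ?_⟩
  · rw [key, (Nat.even_iff.mpr (by omega)).neg_one_pow, one_mul]
  · rw [key, (Nat.odd_iff.mpr (by omega)).neg_one_pow, neg_one_mul]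

/-- In the degenerate even-period case (`n = 2m`, `λᵢ > 0`,
`λ₀λ₂⋯λ_{2m-2} = λ₁λ₃⋯λ_{2m-1}`, focusing recurrence
`x_{i+1} - λ_{i+1} = -λ_{i+1}²/(xᵢ - λᵢ)`), the sign in
`∏(xᵢ - λᵢ) = ± ∏ λᵢ` is determined by the parity of `n/2`:
it is `+` if `n ≡ 0 (mod 4)` and `−` if `n ≡ 2 (mod 4)`. -/
theorem degenerate_sign_parity (m : ℕ) (hm : 1 ≤ m)
    (lam : ℕ → ℝ) (hpos : ∀ i, 0 < lam i)
    (hbal : ∏ k ∈ Finset.range m, lam (2 * k) =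
      ∏ k ∈ Finset.range m, lam (2 * k + 1))
    (x : ℕ → ℝ) (hne : ∀ i < 2 * m, x i ≠ lam i)
    (hrec : ∀ i, i + 1 < 2 * m →
      x (i + 1) - lam (i + 1) = -(lam (i + 1)) ^ 2 / (x i - lam i)) :
    ((2 * m) % 4 = 0 →
      ∏ i ∈ Finset.range (2 * m), (x i - lam i) =
        ∏ i ∈ Finset.range (2 * m), lam i) ∧
    ((2 * m) % 4 = 2 →
      ∏ i ∈ Finset.range (2 * m), (x i - lam i) =
        -∏ i ∈ Finset.range (2 * m), lam i) :=
  degenerate_sign_parity_general m lam hbal x hne hrec
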